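/- Fix an integer n ≥ 1, a real constant Λ, a real K > 0, and η ∈ (−∞, ∞]. Let (a, b, c) be an unstable trajectory of (0, K, K) on (−∞, η), and suppose a(u) < b(u) for all u < η. Then a is strictly increasing on (−∞, η), the ratio b/a is strictly decreasing on (−∞, η), and there exists a real number L ≥ 1 such that b(u)/a(u) → L as u → η⁻. -/

import Mathlib

open Filter Set

/-- A solution (a, b, c) of the reduced Kähler–Einstein system on the interval
(−∞, η) (η ∈ (−∞, ∞] encoded as an `EReal`), positive there, and converging to the
critical point (0, K, K) as u → −∞: an unstable trajectory of (0, K, K). -/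
def IsUnstableTrajectory (n : ℕ) (Λ K : ℝ) (η : EReal) (a b c : ℝ → ℝ) : Prop :=
  (∀ u : ℝ, (u : EReal) < η →
    HasDerivAt a ((1/2) * a u * (b u ^ 2 + c u ^ 2 - a u ^ 2)) u ∧
    HasDerivAt b ((1/2) * b u * (c u ^ 2 + a u ^ 2 - b u ^ 2)) u ∧
    HasDerivAt c ((1/2) * (n : ℝ) * c u *
      (a u ^ 2 + b u ^ 2 - c u ^ 2 - (2 * Λ / (n : ℝ)) * a u ^ 2 * b u ^ 2)) u ∧
    0 < a u ∧ 0 < b u ∧ 0 < c u) ∧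
  Tendsto a atBot (nhds 0) ∧ Tendsto b atBot (nhds K) ∧ Tendsto c atBot (nhds K)

/-- The filter of approach to η ∈ (−∞, ∞] from the left within ℝ:
it is 𝓝[<] η when η is real, and `atTop` when η = ∞. -/
noncomputable def nhdsLeft (η : EReal) : Filter ℝ :=
  Filter.comap (fun u : ℝ => (u : EReal)) (nhdsWithin η (Set.Iio η))

lemma nhdsLeft_top_le_atTop : nhdsLeft ⊤ ≤ atTop := by
  refine (atTop_basis.ge_iff).2 fun M _ => ?_
  refine ⟨Set.Ioi (M : EReal), mem_nhdsWithin_of_mem_nhds (isOpen_Ioi.mem_nhds (EReal.coe_lt_top M)),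
    fun u hu => ?_⟩
  exact le_of_lt (EReal.coe_lt_coe_iff.1 hu)

lemma nhdsLeft_coe (x : ℝ) : nhdsLeft (x : EReal) = nhdsWithin x (Set.Iio x) := by
  unfold nhdsLeft nhdsWithin
  rw [comap_inf, comap_principal, EReal.nhds_coe, Filter.comap_map EReal.coe_injective]
  have : (fun u : ℝ => (u : EReal)) ⁻¹' Set.Iio (x : EReal) = Set.Iio x := by
    ext u; exact EReal.coe_lt_coe_iff
  rw [this]

/- STATEMENT 7: on an unstable trajectory of (0, K, K) with K > 0 (on which a < b),
a is strictly increasing, b/a is strictly decreasing, and b/a tends to some limit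
L ≥ 1 as u → η⁻. -/

theorem a_incr_ratio_decr_limit
    (n : ℕ) (hn : 1 ≤ n) (Λ K : ℝ) (hK : 0 < K) (η : EReal) (hη : η ≠ ⊥)
    (a b c : ℝ → ℝ) (h : IsUnstableTrajectory n Λ K η a b c)
    (hab : ∀ u : ℝ, (u : EReal) < η → a u < b u) :
    StrictMonoOn a {u : ℝ | (u : EReal) < η} ∧
    StrictAntiOn (fun u => b u / a u) {u : ℝ | (u : EReal) < η} ∧
    ∃ L : ℝ, 1 ≤ L ∧ Tendsto (fun u => b u / a u) (nhdsLeft η) (nhds L) := by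
  set S : Set ℝ := {u : ℝ | (u : EReal) < η} with hS
  have hSopen : IsOpen S := by
    have : S = (fun u : ℝ => (u : EReal)) ⁻¹' (Set.Iio η) := rfl
    rw [this]
    exact isOpen_Iio.preimage continuous_coe_real_ereal
  have hSconv : Convex ℝ S := by
    intro p hp q hq s t hs ht hst
    rcases le_total p q with hpq | hpq
    · have : s • p + t • q ≤ q := by
        simp only [smul_eq_mul]
        have h1 : s * p ≤ s * q := mul_le_mul_of_nonneg_left hpq hs
        have h2 : s * q + t * q = q := by rw [← add_mul, hst, one_mul]
        linarith
      exact lt_of_le_of_lt (EReal.coe_le_coe_iff.2 this) hq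
    · have : s • p + t • q ≤ p := by
        simp only [smul_eq_mul]
        have h1 : t * q ≤ t * p := mul_le_mul_of_nonneg_left hpq ht
        have h2 : s * p + t * p = p := by rw [← add_mul, hst, one_mul]
        linarith
      exact lt_of_le_of_lt (EReal.coe_le_coe_iff.2 this) hp
  obtain ⟨hd, -, -, -⟩ := h
  have ha0 : ∀ u ∈ S, 0 < a u := fun u hu => (hd u hu).2.2.2.1
  have hb0 : ∀ u ∈ S, 0 < b u := fun u hu => (hd u hu).2.2.2.2.1
  have hc0 : ∀ u ∈ S, 0 < c u := fun u hu => (hd u hu).2.2.2.2.2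
  have hda : ∀ u ∈ S, HasDerivAt a ((1/2) * a u * (b u ^ 2 + c u ^ 2 - a u ^ 2)) u :=
    fun u hu => (hd u hu).1
  have hdb : ∀ u ∈ S, HasDerivAt b ((1/2) * b u * (c u ^ 2 + a u ^ 2 - b u ^ 2)) u :=
    fun u hu => (hd u hu).2.1
  -- derivative of the ratio
  have hdr : ∀ u ∈ S, HasDerivAt (fun u => b u / a u)
      (((1/2) * b u * (c u ^ 2 + a u ^ 2 - b u ^ 2) * a u -
        b u * ((1/2) * a u * (b u ^ 2 + c u ^ 2 - a u ^ 2))) / a u ^ 2) u :=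
    fun u hu => (hdb u hu).div (hda u hu) (ne_of_gt (ha0 u hu))
  -- a strictly increasing
  have hmono : StrictMonoOn a S := by
    refine strictMonoOn_of_deriv_pos hSconv
      (fun u hu => ((hda u hu).differentiableAt.continuousAt).continuousWithinAt) ?_
    intro u hu
    rw [hSopen.interior_eq] at hu
    rw [(hda u hu).deriv]
    have h1 := ha0 u hu
    have h2 := hab u hu
    have h3 := hc0 u hu
    have hba : 0 < b u ^ 2 - a u ^ 2 := by nlinarith
    have hc2 : 0 < c u ^ 2 := pow_pos h3 2
    have : (0:ℝ) < 1 / 2 * a u := by linarith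
    exact mul_pos this (by linarith)
  -- b/a strictly decreasing
  have hanti : StrictAntiOn (fun u => b u / a u) S := by
    refine strictAntiOn_of_deriv_neg hSconv
      (fun u hu => ((hdr u hu).differentiableAt.continuousAt).continuousWithinAt) ?_
    intro u hu
    rw [hSopen.interior_eq] at hu
    rw [(hdr u hu).deriv]
    have h1 := ha0 u hu
    have h2 := hab u hu
    have h3 := hb0 u hu
    have hnum : (1/2) * b u * (c u ^ 2 + a u ^ 2 - b u ^ 2) * a u -
        b u * ((1/2) * a u * (b u ^ 2 + c u ^ 2 - a u ^ 2)) < 0 := by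
      have heq : (1/2) * b u * (c u ^ 2 + a u ^ 2 - b u ^ 2) * a u -
          b u * ((1/2) * a u * (b u ^ 2 + c u ^ 2 - a u ^ 2)) =
          a u * b u * (a u ^ 2 - b u ^ 2) := by ring
      rw [heq]
      exact mul_neg_of_pos_of_neg (mul_pos h1 h3) (by nlinarith)
    exact div_neg_of_neg_of_pos hnum (by positivity)
  refine ⟨hmono, hanti, ?_⟩
  -- ratio > 1 on S
  have hr1 : ∀ u ∈ S, 1 < b u / a u := fun u hu =>
    (one_lt_div (ha0 u hu)).2 (hab u hu)
  -- existence of limit, by cases on η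
  induction η using EReal.rec with
  | bot => exact absurd rfl hη
  | top =>
    have hSuniv : S = Set.univ := by
      ext u; simp [hS, EReal.coe_lt_top]
    have hAnti : Antitone (fun u => b u / a u) :=
      (strictAntiOn_univ.1 (hSuniv ▸ hanti)).antitone
    have hbdd : BddBelow (Set.range fun u => b u / a u) := by
      refine ⟨1, fun y hy => ?_⟩
      obtain ⟨u, rfl⟩ := hy
      exact (hr1 u (by simp [hSuniv])).le
    refine ⟨⨅ u, b u / a u, ?_, ?_⟩
    · exact le_ciInf fun u => (hr1 u (by simp [hSuniv])).le
    · exact (tendsto_atTop_ciInf hAnti hbdd).mono_left nhdsLeft_top_le_atTop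
  | coe x =>
    have hSIio : S = Set.Iio x := by
      ext u; simp [hS, EReal.coe_lt_coe_iff]
    have hAnti : AntitoneOn (fun u => b u / a u) (Set.Iio x) := by
      rw [← hSIio]; exact hanti.antitoneOn
    have hbdd : BddBelow ((fun u => b u / a u) '' Set.Iio x) := by
      refine ⟨1, fun y hy => ?_⟩
      obtain ⟨u, hu, rfl⟩ := hy
      exact (hr1 u (hSIio ▸ hu)).le
    have hne : (Set.Iio x).Nonempty := ⟨x - 1, by simp⟩
    refine ⟨sInf ((fun u => b u / a u) '' Set.Iio x), ?_, ?_⟩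
    · refine le_csInf (hne.image _) fun y hy => ?_
      obtain ⟨u, hu, rfl⟩ := hy
      exact (hr1 u (hSIio ▸ hu)).le
    · rw [nhdsLeft_coe]
      exact hAnti.tendsto_nhdsLT hbdd
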